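/- Packing selection lemma: let 0 < α ≤ s and let {I_j} be a family of pairwise non-overlapping basic cubes of K. Then there exists a subfamily {I_{j_k}} such that (i) for every basic cube I, Σ_{I_{j_k} ⊂ I} μ(I_{j_k})^{α/s} ≤ 2 μ(I)^{α/s}, and (ii) H^α_μ(∪_j I_j) ≤ 2 Σ_k μ(I_{j_k})^{α/s}. -/

import Mathlib

open MeasureTheory Set Filter
open scoped ENNReal NNReal Topology

noncomputable section

abbrev Pt (d : ℕ) := EuclideanSpace ℝ (Fin d)

/-- An iterated function system of contractive similitudes on ℝ^d with attractor `K`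
satisfying the strong separation condition. -/
structure IFS (d m : ℕ) where
  S : Fin m → Pt d → Pt d
  r : Fin m → ℝ
  r_pos : ∀ i, 0 < r i
  r_lt_one : ∀ i, r i < 1
  similitude : ∀ i x y, dist (S i x) (S i y) = r i * dist x y
  K : Set (Pt d)
  K_nonempty : K.Nonempty
  K_compact : IsCompact K
  K_invariant : K = ⋃ i, S i '' K
  ssc : Pairwise fun i j => Disjoint (S i '' K) (S j '' K)

namespace IFS

variable {d m : ℕ}

/-- The composition `S_{i₁} ∘ ⋯ ∘ S_{iₙ}` for the word `w = i₁ ⋯ iₙ`. -/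
def cylMap (Φ : IFS d m) (w : List (Fin m)) : Pt d → Pt d :=
  w.foldr (fun i g => Φ.S i ∘ g) id

/-- The basic cube (cylinder set) `K_w = S_{i₁} ∘ ⋯ ∘ S_{iₙ}(K)`. -/
def cyl (Φ : IFS d m) (w : List (Fin m)) : Set (Pt d) :=
  Φ.cylMap w '' Φ.K

/-- `μ` is the self-similar probability measure associated with the probability
vector `p` (with all `p i > 0`), i.e. `μ = ∑ i, p i • μ ∘ S i ⁻¹`, supported on `K`. -/
def SelfSimilar (Φ : IFS d m) (p : Fin m → ℝ≥0∞) (μ : Measure (Pt d)) : Prop :=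
  (∑ i, p i = 1) ∧ (∀ i, 0 < p i) ∧ IsProbabilityMeasure μ ∧ μ Φ.K = 1 ∧
    μ = ∑ i, p i • μ.map (Φ.S i)

/-- The α-dimensional Hausdorff content on `K` associated with `μ`, defined via
coverings by countable families of basic cubes; `s` is the Hausdorff dimension of `K`. -/
def hContent (Φ : IFS d m) (μ : Measure (Pt d)) (s α : ℝ) (E : Set (Pt d)) : ℝ≥0∞ :=
  ⨅ (C : Set (List (Fin m))) (_ : C.Countable) (_ : E ⊆ ⋃ w ∈ C, Φ.cyl w),
    ∑' w : C, μ (Φ.cyl w.1) ^ (α / s)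

/-- The dyadic-type Hardy–Littlewood maximal operator over basic cubes containing `x`. -/
def maxOp (Φ : IFS d m) (μ : Measure (Pt d)) (f : Pt d → ℝ) (x : Pt d) : ℝ≥0∞ :=
  ⨆ (w : List (Fin m)) (_ : x ∈ Φ.cyl w),
    (μ (Φ.cyl w))⁻¹ * ∫⁻ y in Φ.cyl w, ENNReal.ofReal |f y| ∂μ

end IFS

/-- The Choquet integral of `g` over `E` with respect to the monotone set function `ν`. -/
def choquetInt {X : Type*} (ν : Set X → ℝ≥0∞) (E : Set X) (g : X → ℝ≥0∞) : ℝ≥0∞ :=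
  ∫⁻ t in Set.Ioi (0 : ℝ), ν {x ∈ E | ENNReal.ofReal t < g x}

/-- `log⁺ t = max (0, log t)`. -/
def posLog (t : ℝ) : ℝ := max 0 (Real.log t)

/-!
Scan the cubes of `C` in a fixed enumeration and keep a cube whenever keeping it does not violate
the packing condition (i). If a cube `w` is rejected, some cube `I ⊇ w` is *heavy*: the kept cubes
inside it already weigh more than `I` itself. The union of `C` is then covered by the kept cubes
together with the minimal heavy cubes. Minimal heavy cubes are pairwise disjoint, so each kept cube
lies in at most one of them, and their total weight is at most that of the kept cubes; this gives
the factor `2` in (ii).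
-/

section Greedy

variable {ι X : Type*} (Q : ι → Set X) (f : ι → ℝ≥0∞)

def packingSum (A : Set ι) (I : ι) : ℝ≥0∞ :=
  ∑' w : {w : ι // w ∈ A ∧ Q w ⊆ Q I}, f w

section PackingSum

variable {Q f} {A B : Set ι} {I : ι}

lemma packingSum_mono (h : A ⊆ B) : packingSum Q f A I ≤ packingSum Q f B I :=
  ENNReal.tsum_mono_subtype f fun _ hv => ⟨h hv.1, hv.2⟩

lemma sum_le_packingSum {G : Finset ι} (hG : ∀ v ∈ G, v ∈ A ∧ Q v ⊆ Q I) :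
    ∑ v ∈ G, f v ≤ packingSum Q f A I := by
  classical
  rw [← Finset.sum_subtype_of_mem f hG]
  exact ENNReal.sum_le_tsum _

lemma packingSum_le_of_forall_finset {c : ℝ≥0∞}
    (h : ∀ G : Finset ι, (∀ v ∈ G, v ∈ A ∧ Q v ⊆ Q I) → ∑ v ∈ G, f v ≤ c) :
    packingSum Q f A I ≤ c := by
  rw [packingSum, ENNReal.tsum_eq_iSup_sum]
  refine iSup_le fun F => ?_
  have hF := h (F.map (Function.Embedding.subtype _)) fun v hv => by
    obtain ⟨t, -, rfl⟩ := Finset.mem_map.mp hv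
    exact t.2
  rwa [Finset.sum_map] at hF

/-- Each cube of `A` lies in at most one cube of `U`, so it is counted at most once on the left. -/
theorem tsum_packingSum_le {U : Set ι} (hU : U.PairwiseDisjoint Q) (hQ : ∀ v, (Q v).Nonempty) :
    ∑' u : U, packingSum Q f A u ≤ ∑' v : A, f v := by
  calc ∑' u : U, packingSum Q f A u = ∑' x : Σ u : U, {v // v ∈ A ∧ Q v ⊆ Q u}, f x.2.1 :=
        (ENNReal.tsum_sigma' fun x : Σ u : U, {v // v ∈ A ∧ Q v ⊆ Q u} => f x.2.1).symm
    _ ≤ ∑' v : A, f v := ENNReal.tsum_comp_le_tsum_of_injective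
        (f := fun x : Σ u : U, {v // v ∈ A ∧ Q v ⊆ Q u} => (⟨x.2.1, x.2.2.1⟩ : A)) ?_
        (fun v : A => f v)
  rintro ⟨u, v, hvA, hvu⟩ ⟨u', v', hvA', hvu'⟩ h
  obtain rfl : v = v' := congrArg Subtype.val h
  obtain ⟨x, hx⟩ := hQ v
  obtain rfl : u = u' :=
    Subtype.ext (hU.elim u.2 u'.2 (Set.not_disjoint_iff.mpr ⟨x, hvu hx, hvu' hx⟩))
  rfl

end PackingSum

variable [Encodable ι]

/-- The cubes kept among those with code `< n`. -/
def greedyStage (C : Set ι) : ℕ → Set ι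
  | 0 => ∅
  | n + 1 => greedyStage C n ∪
      {w | Encodable.encode w = n ∧ w ∈ C ∧
        ∀ I, Q w ⊆ Q I → packingSum Q f (greedyStage C n) I + f w ≤ 2 * f I}

def greedySelect (C : Set ι) : Set ι :=
  ⋃ n, greedyStage Q f C n

variable {Q f} {C A : Set ι}

lemma greedyStage_mono : Monotone (greedyStage Q f C) :=
  monotone_nat_of_le_succ fun _ => Set.subset_union_left

lemma greedyStage_subset : ∀ n, greedyStage Q f C n ⊆ C
  | 0 => Set.empty_subset _
  | n + 1 => Set.union_subset (greedyStage_subset n) fun _ hw => hw.2.1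

lemma greedySelect_subset : greedySelect Q f C ⊆ C :=
  Set.iUnion_subset greedyStage_subset

lemma encode_lt_of_mem_greedyStage : ∀ {n w}, w ∈ greedyStage Q f C n → Encodable.encode w < n
  | _ + 1, _, Or.inl hw => Nat.lt_succ_of_lt (encode_lt_of_mem_greedyStage hw)
  | _ + 1, _, Or.inr hw => hw.1 ▸ Nat.lt_succ_self _

lemma mem_greedyStage_encode_succ :
    ∀ {n w}, w ∈ greedyStage Q f C n → w ∈ greedyStage Q f C (Encodable.encode w + 1)
  | _ + 1, _, Or.inl hw => mem_greedyStage_encode_succ hw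
  | _ + 1, _, Or.inr hw => hw.1 ▸ Or.inr hw

lemma mem_greedyStage_iff {n : ℕ} {w : ι} :
    w ∈ greedyStage Q f C n ↔ w ∈ greedySelect Q f C ∧ Encodable.encode w < n := by
  refine ⟨fun hw => ⟨Set.mem_iUnion.mpr ⟨n, hw⟩, encode_lt_of_mem_greedyStage hw⟩, ?_⟩
  rintro ⟨hw, hlt⟩
  obtain ⟨k, hk⟩ := Set.mem_iUnion.mp hw
  exact greedyStage_mono hlt (mem_greedyStage_encode_succ hk)

lemma mem_greedySelect_iff {w : ι} :
    w ∈ greedySelect Q f C ↔ w ∈ C ∧ ∀ I, Q w ⊆ Q I →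
      packingSum Q f (greedyStage Q f C (Encodable.encode w)) I + f w ≤ 2 * f I := by
  have hnot : w ∉ greedyStage Q f C (Encodable.encode w) :=
    fun h => lt_irrefl _ (encode_lt_of_mem_greedyStage h)
  rw [← and_iff_left (a := w ∈ greedySelect Q f C) (Nat.lt_succ_self _), ← mem_greedyStage_iff]
  simp only [greedyStage, Set.mem_union, hnot, false_or, Set.mem_ofPred_eq, true_and]

theorem packingSum_greedySelect_le (I : ι) :
    packingSum Q f (greedySelect Q f C) I ≤ 2 * f I := by
  classical
  refine packingSum_le_of_forall_finset fun G hG => ?_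
  rcases G.eq_empty_or_nonempty with rfl | hne
  · simp
  obtain ⟨w, hwG, hmax⟩ := G.exists_max_image Encodable.encode hne
  obtain ⟨hw, hwI⟩ := hG w hwG
  have hearlier : ∀ v ∈ G.erase w,
      v ∈ greedyStage Q f C (Encodable.encode w) ∧ Q v ⊆ Q I := by
    intro v hv
    obtain ⟨hvw, hvG⟩ := Finset.mem_erase.mp hv
    have hlt : Encodable.encode v < Encodable.encode w :=
      (hmax v hvG).lt_of_ne fun h => hvw (Encodable.encode_injective h)
    exact ⟨mem_greedyStage_iff.mpr ⟨(hG v hvG).1, hlt⟩, (hG v hvG).2⟩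
  calc ∑ v ∈ G, f v = ∑ v ∈ G.erase w, f v + f w := (Finset.sum_erase_add G f hwG).symm
    _ ≤ packingSum Q f (greedyStage Q f C (Encodable.encode w)) I + f w :=
      add_le_add_left (sum_le_packingSum hearlier) _
    _ ≤ 2 * f I := (mem_greedySelect_iff.mp hw).2 I hwI

theorem exists_lt_packingSum_of_notMem_greedySelect (hf : ∀ w I, Q w ⊆ Q I → f w ≤ f I)
    {w : ι} (hwC : w ∈ C) (hw : w ∉ greedySelect Q f C) :
    ∃ I, Q w ⊆ Q I ∧ f I < packingSum Q f (greedySelect Q f C) I := by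
  simp only [mem_greedySelect_iff, hwC, true_and, not_forall, not_le, exists_prop] at hw
  obtain ⟨I, hwI, hrej⟩ := hw
  refine ⟨I, hwI, ?_⟩
  have hlt : f I + f I < packingSum Q f (greedySelect Q f C) I + f I :=
    calc f I + f I = 2 * f I := (two_mul _).symm
      _ < packingSum Q f (greedyStage Q f C (Encodable.encode w)) I + f w := hrej
      _ ≤ packingSum Q f (greedySelect Q f C) I + f I :=
        add_le_add (packingSum_mono (Set.subset_iUnion _ _)) (hf w I hwI)
  have hfin : f I ≠ ⊤ := (ENNReal.add_ne_top.mp (ne_top_of_lt hlt)).1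
  exact (ENNReal.add_lt_add_iff_right hfin).mp hlt

end Greedy

section MinimalPrefixes

variable {α : Type*}

def minimalPrefixes (W : Set (List α)) : Set (List α) :=
  {J | J ∈ W ∧ ∀ K, K <+: J → K ∈ W → K = J}

lemma exists_mem_minimalPrefixes {W : Set (List α)} {I : List α} (hI : I ∈ W) :
    ∃ J ∈ minimalPrefixes W, J <+: I := by
  obtain ⟨J, ⟨hJI, hJW⟩, hmin⟩ :=
    (measure List.length).wf.has_min {J | J <+: I ∧ J ∈ W} ⟨I, List.prefix_refl I, hI⟩
  refine ⟨J, ⟨hJW, fun K hKJ hKW => hKJ.eq_of_length ?_⟩, hJI⟩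
  exact hKJ.length_le.antisymm (not_lt.mp (hmin K ⟨hKJ.trans hJI, hKW⟩))

end MinimalPrefixes

namespace IFS

variable {d m : ℕ} (Φ : IFS d m)

lemma cyl_cons (i : Fin m) (w : List (Fin m)) : Φ.cyl (i :: w) = Φ.S i '' Φ.cyl w := by
  rw [cyl, cyl, ← Set.image_comp]
  rfl

lemma cylMap_append (a b : List (Fin m)) : Φ.cylMap (a ++ b) = Φ.cylMap a ∘ Φ.cylMap b := by
  simp only [cylMap, List.foldr_append]
  induction a with
  | nil => rfl
  | cons i a ih => simp only [List.foldr_cons, ih, Function.comp_assoc]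

lemma cyl_nonempty (w : List (Fin m)) : (Φ.cyl w).Nonempty :=
  Φ.K_nonempty.image _

lemma cyl_subset_K : ∀ w : List (Fin m), Φ.cyl w ⊆ Φ.K
  | [] => by simp [cyl, cylMap]
  | i :: w => by
    rw [cyl_cons]
    conv_rhs => rw [Φ.K_invariant]
    exact (Set.image_mono (cyl_subset_K w)).trans (Set.subset_iUnion (fun j => Φ.S j '' Φ.K) i)

lemma cyl_subset_cyl_of_prefix {v w : List (Fin m)} (h : v <+: w) : Φ.cyl w ⊆ Φ.cyl v := by
  obtain ⟨u, rfl⟩ := h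
  rw [cyl, cylMap_append, Set.image_comp]
  exact Set.image_mono (Φ.cyl_subset_K u)

lemma S_injective (i : Fin m) : Function.Injective (Φ.S i) := fun x y h => by
  have hxy := Φ.similitude i x y
  rw [h, dist_self, eq_comm, mul_eq_zero] at hxy
  exact dist_eq_zero.mp (hxy.resolve_left (Φ.r_pos i).ne')

theorem disjoint_cyl_of_not_prefix :
    ∀ {v w : List (Fin m)}, ¬ v <+: w → ¬ w <+: v → Disjoint (Φ.cyl v) (Φ.cyl w)
  | [], _, h, _ | _, [], _, h => absurd List.nil_prefix h
  | i :: v, j :: w, hvw, hwv => by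
    rw [cyl_cons, cyl_cons]
    by_cases hij : i = j
    · subst hij
      simp only [List.cons_prefix_cons, true_and] at hvw hwv
      exact (Set.disjoint_image_iff (Φ.S_injective i)).mpr (disjoint_cyl_of_not_prefix hvw hwv)
    · exact (Φ.ssc hij).mono (Set.image_mono (Φ.cyl_subset_K v))
        (Set.image_mono (Φ.cyl_subset_K w))

lemma pairwiseDisjoint_cyl_minimalPrefixes (W : Set (List (Fin m))) :
    (minimalPrefixes W).PairwiseDisjoint Φ.cyl := by
  intro u hu v hv huv
  refine Φ.disjoint_cyl_of_not_prefix (fun h => huv ?_) (fun h => huv ?_)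
  · exact hv.2 u h hu.1
  · exact (hu.2 v h hv.1).symm

lemma hContent_le_tsum {μ : Measure (Pt d)} {s α : ℝ} {E : Set (Pt d)} {D : Set (List (Fin m))}
    (hE : E ⊆ ⋃ w ∈ D, Φ.cyl w) :
    Φ.hContent μ s α E ≤ ∑' w : D, μ (Φ.cyl w.1) ^ (α / s) :=
  iInf_le_of_le D (iInf_le_of_le D.to_countable (iInf_le _ hE))

end IFS

theorem packing_lemma_general (d m : ℕ) (Φ : IFS d m)
    (μ : Measure (Pt d))
    (s : ℝ) (hs : 0 < s)
    (α : ℝ) (hα : 0 < α)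
    (C : Set (List (Fin m))) :
    ∃ C' ⊆ C,
      (∀ I : List (Fin m),
        ∑' w : {w : List (Fin m) // w ∈ C' ∧ Φ.cyl w ⊆ Φ.cyl I},
            μ (Φ.cyl w.1) ^ (α / s) ≤ 2 * μ (Φ.cyl I) ^ (α / s)) ∧
      Φ.hContent μ s α (⋃ w ∈ C, Φ.cyl w) ≤
        2 * ∑' w : C', μ (Φ.cyl w.1) ^ (α / s) := by
  set f : List (Fin m) → ℝ≥0∞ := fun w => μ (Φ.cyl w) ^ (α / s)
  have hf : ∀ w I, Φ.cyl w ⊆ Φ.cyl I → f w ≤ f I := fun _ _ h =>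
    ENNReal.rpow_le_rpow (measure_mono h) (div_pos hα hs).le
  set A := greedySelect Φ.cyl f C
  set heavy := {I | f I < packingSum Φ.cyl f A I}
  set W := minimalPrefixes heavy
  have hcover : ⋃ w ∈ C, Φ.cyl w ⊆ ⋃ u ∈ A ∪ W, Φ.cyl u := by
    refine Set.iUnion₂_subset fun w hwC => ?_
    by_cases hwA : w ∈ A
    · exact Set.subset_biUnion_of_mem (u := Φ.cyl) (Or.inl hwA)
    obtain ⟨I, hwI, hI⟩ := exists_lt_packingSum_of_notMem_greedySelect hf hwC hwA
    obtain ⟨J, hJ, hJI⟩ := exists_mem_minimalPrefixes (W := heavy) hI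
    exact hwI.trans ((Φ.cyl_subset_cyl_of_prefix hJI).trans
      (Set.subset_biUnion_of_mem (u := Φ.cyl) (Or.inr hJ)))
  refine ⟨A, greedySelect_subset, packingSum_greedySelect_le, ?_⟩
  calc Φ.hContent μ s α (⋃ w ∈ C, Φ.cyl w) ≤ ∑' u : ↥(A ∪ W), f u := Φ.hContent_le_tsum hcover
    _ ≤ ∑' u : A, f u + ∑' u : W, f u := ENNReal.tsum_union_le f A W
    _ ≤ ∑' u : A, f u + ∑' u : W, packingSum Φ.cyl f A u := by
      gcongr with u
      exact u.2.1.le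
    _ ≤ ∑' u : A, f u + ∑' u : A, f u := by
      gcongr
      exact tsum_packingSum_le (Φ.pairwiseDisjoint_cyl_minimalPrefixes _) Φ.cyl_nonempty
    _ = 2 * ∑' u : A, f u := (two_mul _).symm

/-- Packing selection lemma: from a family of pairwise disjoint basic cubes one can select
a subfamily satisfying the packing condition and controlling the content of the union. -/
theorem packing_lemma (d m : ℕ) (Φ : IFS d m) (p : Fin m → ℝ≥0∞)
    (μ : Measure (Pt d)) (hμ : Φ.SelfSimilar p μ)
    (s : ℝ) (hs : 0 < s) (hdim : ∑ i, Φ.r i ^ s = 1)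
    (α : ℝ) (hα : 0 < α) (hαs : α ≤ s)
    (C : Set (List (Fin m))) (hC : C.Countable) (hdisj : C.PairwiseDisjoint Φ.cyl) :
    ∃ C' ⊆ C,
      (∀ I : List (Fin m),
        ∑' w : {w : List (Fin m) // w ∈ C' ∧ Φ.cyl w ⊆ Φ.cyl I},
            μ (Φ.cyl w.1) ^ (α / s) ≤ 2 * μ (Φ.cyl I) ^ (α / s)) ∧
      Φ.hContent μ s α (⋃ w ∈ C, Φ.cyl w) ≤
        2 * ∑' w : C', μ (Φ.cyl w.1) ^ (α / s) :=
  packing_lemma_general d m Φ μ s hs α hα C
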